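/- arXiv:gr-qc/0212086 — 4 statements merged into one kernel-verified Lean document; each statement's English description precedes it below -/
import Mathlib

section
/- With the hypotheses of the conformal transformation formula Q_{v̂} = e^{2λ}(Q_v − v ⊗ h(dλ)) for a p-plane distribution V, the traces satisfy Tr Q_{v̂} = Tr Q_v − p · h(dλ). Consequently the foliation character (vanishing of the antisymmetric part A_v of Q_v) and the umbilical character (vanishing of the traceless symmetric part S_v^T) are conformally invariant, while the minimal character (vanishing of Tr S_v) is not in general. -/
/-- pointwise index model: with the conformal transformation
formula `Q_{v̂} = e^{2λ}(Q_v − v ⊗ h(dλ))` for a p-plane distribution, the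
traces satisfy `Tr Q_{v̂} = Tr Q_v − p·h(dλ)` (traces taken with the inverse
metric, `ĝ⁻¹ = e^{-2λ} g⁻¹`), and the vanishing of the antisymmetric part
`A_v` and of the traceless symmetric part `S_v^T` are conformally invariant
properties. -/
theorem stmt_2 (p : ℕ) (hp : 0 < p)
    (g ginv v h : Fin 4 → Fin 4 → ℝ)
    (hginv : ∀ a b, ∑ e, g a e * ginv e b = if a = b then (1 : ℝ) else 0)
    (hginvsym : ∀ a b, ginv a b = ginv b a)
    (hgsym : ∀ a b, g a b = g b a)
    (hvh : ∀ a b, v a b + h a b = if a = b then (1 : ℝ) else 0)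
    (htrv : ∑ a, v a a = (p : ℝ))
    (l : ℝ) (c : ℝ) (hc : c = Real.exp (2 * l))
    (dl : Fin 4 → ℝ)
    (vcov : Fin 4 → Fin 4 → ℝ) (hvcov : ∀ a b, vcov a b = ∑ d, g a d * v d b)
    (hvcovsym : ∀ a b, vcov a b = vcov b a)
    (hdl : Fin 4 → ℝ) (hhdl : ∀ b, hdl b = ∑ a, dl a * h a b)
    (Q Qhat : Fin 4 → Fin 4 → Fin 4 → ℝ)
    (hconf : ∀ a b d, Qhat a b d = c * (Q a b d - vcov a b * hdl d))
    (TrQ TrQhat : Fin 4 → ℝ)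
    (hTrQ : ∀ d, TrQ d = ∑ a, ∑ b, ginv a b * Q a b d)
    (hTrQhat : ∀ d, TrQhat d = ∑ a, ∑ b, (c⁻¹ * ginv a b) * Qhat a b d)
    (A Ahat S Shat ST SThat : Fin 4 → Fin 4 → Fin 4 → ℝ)
    (hA : ∀ a b d, A a b d = (Q a b d - Q b a d) / 2)
    (hAhat : ∀ a b d, Ahat a b d = (Qhat a b d - Qhat b a d) / 2)
    (hS : ∀ a b d, S a b d = (Q a b d + Q b a d) / 2)
    (hShat : ∀ a b d, Shat a b d = (Qhat a b d + Qhat b a d) / 2)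
    (hST : ∀ a b d, ST a b d = S a b d - (1 / (p : ℝ)) * vcov a b * TrQ d)
    (hSThat : ∀ a b d, SThat a b d =
      Shat a b d - (1 / (p : ℝ)) * (c * vcov a b) * TrQhat d) :
    (∀ d, TrQhat d = TrQ d - (p : ℝ) * hdl d)
    ∧ ((∀ a b d, A a b d = 0) ↔ (∀ a b d, Ahat a b d = 0))
    ∧ ((∀ a b d, ST a b d = 0) ↔ (∀ a b d, SThat a b d = 0)) := by
  have hc0 : c ≠ 0 := by rw [hc]; positivity
  have hp0 : (p : ℝ) ≠ 0 := Nat.cast_ne_zero.mpr hp.ne'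
  -- key trace identity: ∑ ginv a b * vcov a b = p
  have key : (∑ a, ∑ b, ginv a b * vcov a b) = (p : ℝ) := by
    have step : (∑ a, ∑ b, ginv a b * vcov a b)
        = ∑ b, ∑ e, (∑ a, g e a * ginv a b) * v e b := by
      simp_rw [hvcov, Finset.mul_sum, Finset.sum_mul]
      rw [Finset.sum_comm]
      refine Finset.sum_congr rfl fun b _ => ?_
      rw [Finset.sum_comm]
      refine Finset.sum_congr rfl fun e _ => ?_
      refine Finset.sum_congr rfl fun a _ => ?_
      rw [hgsym]; ring
    rw [step]
    have : ∀ b, (∑ e, (∑ a, g e a * ginv a b) * v e b) = v b b := by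
      intro b
      simp_rw [hginv]
      rw [Finset.sum_eq_single b]
      · simp
      · intro e _ he; simp [he]
      · simp
    simp_rw [this, htrv]
  have htr : ∀ d, TrQhat d = TrQ d - (p : ℝ) * hdl d := by
    intro d
    rw [hTrQhat, hTrQ]
    have : (∑ a, ∑ b, (c⁻¹ * ginv a b) * Qhat a b d)
        = ∑ a, ∑ b, (ginv a b * Q a b d - ginv a b * vcov a b * hdl d) := by
      refine Finset.sum_congr rfl fun a _ => Finset.sum_congr rfl fun b _ => ?_
      rw [hconf]
      field_simp
    rw [this]
    simp_rw [Finset.sum_sub_distrib, ← Finset.sum_mul]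
    rw [key]
  refine ⟨htr, ?_, ?_⟩
  · have hAA : ∀ a b d, Ahat a b d = c * A a b d := by
      intro a b d
      rw [hAhat, hA, hconf, hconf, hvcovsym a b]
      ring
    constructor
    · intro H a b d; rw [hAA, H a b d, mul_zero]
    · intro H a b d
      have := H a b d
      rw [hAA] at this
      exact (mul_eq_zero.mp this).resolve_left hc0
  · have hSS : ∀ a b d, SThat a b d = c * ST a b d := by
      intro a b d
      rw [hSThat, hShat, hconf, hconf, htr, hST, hS, hvcovsym b a]
      field_simp
      ring
    constructor
    · intro H a b d; rw [hSS, H a b d, mul_zero]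
    · intro H a b d
      have := H a b d
      rw [hSS] at this
      exact (mul_eq_zero.mp this).resolve_left hc0
end

section
/- Let F = e^φ[cos ψ U + sin ψ *U] be a regular 2-form with canonical elements (U, φ, ψ), and ℱ = (1/√2)(F − i*F) = e^{φ + iψ} 𝒰 the associated self-dual form. Then the source-free Maxwell equations δF = 0, δ*F = 0 (equivalently δℱ = 0) hold if and only if dφ = Φ(U) := i(δU)U − i(δ*U)*U and dψ = Ψ(U) := −i(δU)*U − i(δ*U)U. -/
/-!
With indices raised by `g⁻¹`, let `P = g⁻¹U` and `Q = g⁻¹*U` act on covectors from the right,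
so that `i(v)U = vP`. Unitarity says `P² - Q² = 1` and `PQ = 0`, which force `QP = 0`; hence
`𝒫 = P + iQ` satisfies `𝒫² = 1` (this is `2𝒰² = g`). By the Leibniz rule
`δF - iδ*F = e^{φ+iψ}(A - iB)` with `A = δU - dφ P - dψ Q` and `B = δ*U - dφ Q + dψ P`, so
Maxwell's equations say `δU + iδ*U = (dφ - i dψ)𝒫`. As `𝒫` is an involution this is equivalent
to `dφ - i dψ = (δU + iδ*U)𝒫`, whose real and imaginary parts are `dφ = Φ(U)` and `dψ = Ψ(U)`.
-/

open Matrix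

theorem smul_add_smul_eq_zero_and_smul_sub_smul_eq_zero_iff {R V : Type*} [CommRing R]
    [AddCommGroup V] [Module R V] {c s : R} (hcs : c ^ 2 + s ^ 2 = 1) (A B : V) :
    (c • A + s • B = 0 ∧ c • B - s • A = 0) ↔ (A = 0 ∧ B = 0) := by
  constructor
  · rintro ⟨h₁, h₂⟩
    constructor
    · linear_combination (norm := module) c • h₁ - s • h₂ - hcs • A
    · linear_combination (norm := module) s • h₁ + c • h₂ - hcs • B
  · rintro ⟨rfl, rfl⟩
    simp

theorem mul_eq_zero_of_mul_self_sub_mul_self_eq_one {R : Type*} [Ring R] {P Q : R}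
    (h : P * P - Q * Q = 1) (hPQ : P * Q = 0) : Q * P = 0 := by
  have hcomm : Q * (P * P) = P * (P * Q) := by
    rw [← mul_assoc P P Q, show P * P = 1 + Q * Q by rw [← h]; abel]
    noncomm_ring
  calc Q * P = Q * P * (P * P - Q * Q) := by rw [h, mul_one]
    _ = Q * (P * P) * P - Q * (P * Q) * Q := by noncomm_ring
    _ = 0 := by rw [hcomm, hPQ]; simp

section Contraction

variable {n R : Type*} [Fintype n]

theorem sum_sum_mul_mul_eq_mul_mul_apply [CommSemiring R] (A B C : Matrix n n R) (a b : n) :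
    ∑ m, ∑ k, A a m * B m k * C k b = (A * (B * C)) a b := by
  simp only [mul_apply, Finset.mul_sum, mul_assoc]

theorem sum_sum_mul_mul_eq_vecMul_mul_apply [CommSemiring R] (A B : Matrix n n R) (v : n → R)
    (b : n) : ∑ e, ∑ e', A e e' * v e * B e' b = (v ᵥ* (A * B)) b := by
  simp only [vecMul, dotProduct, mul_apply, Finset.mul_sum]
  exact Finset.sum_congr rfl fun e _ => Finset.sum_congr rfl fun e' _ => by ring

theorem eq_vecMul_add_vecMul_and_iff [DecidableEq n] [CommRing R] {P Q : Matrix n n R}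
    (hP : P * P - Q * Q = 1) (hPQ : P * Q = 0) (x y a c : n → R) :
    (a = x ᵥ* P + y ᵥ* Q ∧ c = x ᵥ* Q - y ᵥ* P) ↔
      (x = a ᵥ* P - c ᵥ* Q ∧ y = -(a ᵥ* Q) - c ᵥ* P) := by
  have hQP := mul_eq_zero_of_mul_self_sub_mul_self_eq_one hP hPQ
  have hPP : P * P = 1 + Q * Q := by rw [← hP]; abel
  constructor
  · rintro ⟨rfl, rfl⟩
    simp only [add_vecMul, sub_vecMul, vecMul_vecMul, hPP, hPQ, hQP, vecMul_add, vecMul_one,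
      vecMul_zero]
    constructor <;> abel
  · rintro ⟨rfl, rfl⟩
    simp only [sub_vecMul, neg_vecMul, vecMul_vecMul, hPP, hPQ, hQP, vecMul_add, vecMul_one,
      vecMul_zero]
    constructor <;> abel

end Contraction

section Divergence

variable {n R : Type*} [Fintype n] [CommRing R]

def divergence (Gi : Matrix n n R) (D : n → n → n → R) : n → R :=
  fun b => -∑ e, ∑ e', Gi e e' * D e e' b

theorem divergence_neg (Gi : Matrix n n R) (D : n → n → n → R) :
    divergence Gi (-D) = -divergence Gi D := by
  funext b
  simp [divergence]

theorem divergence_eq_of_leibniz (Gi X Y : Matrix n n R) (DX DY DF : n → n → n → R)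
    (k c s : R) (v w : n → R)
    (h : ∀ e a b, DF e a b = k * ((v e * c - w e * s) * X a b + c * DX e a b
      + (v e * s + w e * c) * Y a b + s * DY e a b)) :
    divergence Gi DF = k • (c • (divergence Gi DX - (v ᵥ* (Gi * X) + w ᵥ* (Gi * Y)))
      + s • (divergence Gi DY - (v ᵥ* (Gi * Y) - w ᵥ* (Gi * X)))) := by
  funext b
  simp only [divergence, Pi.add_apply, Pi.sub_apply, Pi.smul_apply, smul_eq_mul,
    ← sum_sum_mul_mul_eq_vecMul_mul_apply, h, Finset.mul_sum, ← Finset.sum_neg_distrib,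
    ← Finset.sum_add_distrib, ← Finset.sum_sub_distrib]
  exact Finset.sum_congr rfl fun e _ => Finset.sum_congr rfl fun e' _ => by ring

theorem divergence_dual_eq_of_leibniz (Gi X Y : Matrix n n R) (DX DY DF : n → n → n → R)
    (k c s : R) (v w : n → R)
    (h : ∀ e a b, DF e a b = k * ((v e * c - w e * s) * Y a b + c * DY e a b
      - (v e * s + w e * c) * X a b - s * DX e a b)) :
    divergence Gi DF = k • (c • (divergence Gi DY - (v ᵥ* (Gi * Y) - w ᵥ* (Gi * X)))
      - s • (divergence Gi DX - (v ᵥ* (Gi * X) + w ᵥ* (Gi * Y)))) := by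
  rw [divergence_eq_of_leibniz Gi Y (-X) DY (-DX) DF k c s v w
    fun e a b => by rw [h]; simp only [Pi.neg_apply, Matrix.neg_apply]; ring]
  simp only [Matrix.mul_neg, vecMul_neg, divergence_neg]
  module

end Divergence

theorem divergence_eq_zero_and_iff_of_leibniz {n K : Type*} [Fintype n] [DecidableEq n] [Field K]
    {G Gi U sU : Matrix n n K} (hG : G * Gi = 1) (hU2 : U * (Gi * U) - sU * (Gi * sU) = G)
    (hUsU : U * (Gi * sU) = 0) {k c s : K} (hk : k ≠ 0) (hcs : c ^ 2 + s ^ 2 = 1)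
    {v w : n → K} {DU DsU DF DsF : n → n → n → K}
    (hDF : ∀ e a b, DF e a b = k * ((v e * c - w e * s) * U a b + c * DU e a b
      + (v e * s + w e * c) * sU a b + s * DsU e a b))
    (hDsF : ∀ e a b, DsF e a b = k * ((v e * c - w e * s) * sU a b + c * DsU e a b
      - (v e * s + w e * c) * U a b - s * DU e a b)) :
    (divergence Gi DF = 0 ∧ divergence Gi DsF = 0) ↔
      (v = divergence Gi DU ᵥ* (Gi * U) - divergence Gi DsU ᵥ* (Gi * sU) ∧
        w = -(divergence Gi DU ᵥ* (Gi * sU)) - divergence Gi DsU ᵥ* (Gi * U)) := by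
  have hP : Gi * U * (Gi * U) - Gi * sU * (Gi * sU) = 1 := by
    rw [mul_assoc, mul_assoc, ← mul_sub, hU2, mul_eq_one_comm.mp hG]
  have hPQ : Gi * U * (Gi * sU) = 0 := by rw [mul_assoc, hUsU, mul_zero]
  rw [divergence_eq_of_leibniz Gi U sU DU DsU DF k c s v w hDF,
    divergence_dual_eq_of_leibniz Gi U sU DU DsU DsF k c s v w hDsF,
    smul_eq_zero_iff_right hk, smul_eq_zero_iff_right hk,
    smul_add_smul_eq_zero_and_smul_sub_smul_eq_zero_iff hcs, sub_eq_zero, sub_eq_zero]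
  exact eq_vecMul_add_vecMul_and_iff hP hPQ v w _ _

theorem stmt_8_general (M : Type*)
    (g ginv U sU : M → Fin 4 → Fin 4 → ℝ)
    (φ ψ : M → ℝ) (dφ dψ : M → Fin 4 → ℝ)
    (DU DsU DF DsF : M → Fin 4 → Fin 4 → Fin 4 → ℝ)
    (δU δsU δF δsF : M → Fin 4 → ℝ)
    (hginv : ∀ x a b, ∑ e, g x a e * ginv x e b = if a = b then (1 : ℝ) else 0)
    -- unitarity: U² − (*U)² = g, U × *U = 0, (U,U) = −1, (*U,*U) = 1
    (hU2 : ∀ x a b, (∑ m, ∑ n, U x a m * ginv x m n * U x n b)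
        - (∑ m, ∑ n, sU x a m * ginv x m n * sU x n b) = g x a b)
    (hUsU : ∀ x a b, (∑ m, ∑ n, U x a m * ginv x m n * sU x n b) = 0)
    -- Leibniz rule for the covariant derivatives of F and *F
    (hDF : ∀ x e a b, DF x e a b = Real.exp (φ x) *
      ((dφ x e * Real.cos (ψ x) - dψ x e * Real.sin (ψ x)) * U x a b
        + Real.cos (ψ x) * DU x e a b
        + (dφ x e * Real.sin (ψ x) + dψ x e * Real.cos (ψ x)) * sU x a b
        + Real.sin (ψ x) * DsU x e a b))
    (hDsF : ∀ x e a b, DsF x e a b = Real.exp (φ x) *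
      ((dφ x e * Real.cos (ψ x) - dψ x e * Real.sin (ψ x)) * sU x a b
        + Real.cos (ψ x) * DsU x e a b
        - (dφ x e * Real.sin (ψ x) + dψ x e * Real.cos (ψ x)) * U x a b
        - Real.sin (ψ x) * DU x e a b))
    -- divergences δ = −Tr∇
    (hδU : ∀ x b, δU x b = -∑ e, ∑ e', ginv x e e' * DU x e e' b)
    (hδsU : ∀ x b, δsU x b = -∑ e, ∑ e', ginv x e e' * DsU x e e' b)
    (hδF : ∀ x b, δF x b = -∑ e, ∑ e', ginv x e e' * DF x e e' b)
    (hδsF : ∀ x b, δsF x b = -∑ e, ∑ e', ginv x e e' * DsF x e e' b) :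
    ((∀ x b, δF x b = 0) ∧ (∀ x b, δsF x b = 0)) ↔
      ((∀ x b, dφ x b =
          (∑ a, ∑ a', ginv x a a' * δU x a * U x a' b)
            - (∑ a, ∑ a', ginv x a a' * δsU x a * sU x a' b)) ∧
       (∀ x b, dψ x b =
          -(∑ a, ∑ a', ginv x a a' * δU x a * sU x a' b)
            - (∑ a, ∑ a', ginv x a a' * δsU x a * U x a' b))) := by
  have hG x : of (g x) * of (ginv x) = 1 :=
    ext fun a b => by rw [mul_apply, one_apply]; exact hginv x a b
  have hU2' x : of (U x) * (of (ginv x) * of (U x)) - of (sU x) * (of (ginv x) * of (sU x))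
      = of (g x) := ext fun a b => by
    rw [Matrix.sub_apply, ← sum_sum_mul_mul_eq_mul_mul_apply, ← sum_sum_mul_mul_eq_mul_mul_apply]
    exact hU2 x a b
  have hUsU' x : of (U x) * (of (ginv x) * of (sU x)) = 0 := ext fun a b => by
    rw [← sum_sum_mul_mul_eq_mul_mul_apply]; exact hUsU x a b
  have h x := divergence_eq_zero_and_iff_of_leibniz (hG x) (hU2' x) (hUsU' x)
    (Real.exp_ne_zero (φ x)) (Real.cos_sq_add_sin_sq (ψ x)) (hDF x) (hDsF x)
  simp only [funext_iff, Pi.zero_apply, Pi.sub_apply, Pi.neg_apply,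
    ← sum_sum_mul_mul_eq_vecMul_mul_apply, divergence, of_apply, ← hδF, ← hδsF, ← hδU, ← hδsU] at h
  exact forall_and.symm.trans ((forall_congr' h).trans forall_and)

/-- index model over an abstract spacetime `M`: for a regular
2-form `F = e^φ[cos ψ U + sin ψ *U]` with canonical elements `(U, φ, ψ)`, the
source-free Maxwell equations `δF = 0`, `δ*F = 0` hold if and only if
`dφ = Φ(U) := i(δU)U − i(δ*U)*U` and `dψ = Ψ(U) := −i(δU)*U − i(δ*U)U`.
Covariant derivatives (`DU x e a b = ∇_e U_{ab}`, etc.) are given as data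
subject to the Leibniz rule for `F` and `*F`; divergences are
`(δU)_b = −∇^a U_{ab}`. -/
theorem stmt_8 (M : Type*)
    (g ginv U sU F sF : M → Fin 4 → Fin 4 → ℝ)
    (φ ψ : M → ℝ) (dφ dψ : M → Fin 4 → ℝ)
    (DU DsU DF DsF : M → Fin 4 → Fin 4 → Fin 4 → ℝ)
    (δU δsU δF δsF : M → Fin 4 → ℝ)
    (hginv : ∀ x a b, ∑ e, g x a e * ginv x e b = if a = b then (1 : ℝ) else 0)
    (hgsym : ∀ x a b, g x a b = g x b a)
    (hginvsym : ∀ x a b, ginv x a b = ginv x b a)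
    (hUanti : ∀ x a b, U x a b = -U x b a)
    (hsUanti : ∀ x a b, sU x a b = -sU x b a)
    -- unitarity: U² − (*U)² = g, U × *U = 0, (U,U) = −1, (*U,*U) = 1
    (hU2 : ∀ x a b, (∑ m, ∑ n, U x a m * ginv x m n * U x n b)
        - (∑ m, ∑ n, sU x a m * ginv x m n * sU x n b) = g x a b)
    (hUsU : ∀ x a b, (∑ m, ∑ n, U x a m * ginv x m n * sU x n b) = 0)
    (hUU : ∀ x, (∑ a, ∑ b, ∑ a', ∑ b',
      ginv x a a' * ginv x b b' * U x a b * U x a' b') = -2)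
    (hsUsU : ∀ x, (∑ a, ∑ b, ∑ a', ∑ b',
      ginv x a a' * ginv x b b' * sU x a b * sU x a' b') = 2)
    -- F = e^φ(cos ψ U + sin ψ *U) and its Hodge dual
    (hF : ∀ x a b, F x a b = Real.exp (φ x) *
      (Real.cos (ψ x) * U x a b + Real.sin (ψ x) * sU x a b))
    (hsF : ∀ x a b, sF x a b = Real.exp (φ x) *
      (Real.cos (ψ x) * sU x a b - Real.sin (ψ x) * U x a b))
    -- Leibniz rule for the covariant derivatives of F and *F
    (hDF : ∀ x e a b, DF x e a b = Real.exp (φ x) *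
      ((dφ x e * Real.cos (ψ x) - dψ x e * Real.sin (ψ x)) * U x a b
        + Real.cos (ψ x) * DU x e a b
        + (dφ x e * Real.sin (ψ x) + dψ x e * Real.cos (ψ x)) * sU x a b
        + Real.sin (ψ x) * DsU x e a b))
    (hDsF : ∀ x e a b, DsF x e a b = Real.exp (φ x) *
      ((dφ x e * Real.cos (ψ x) - dψ x e * Real.sin (ψ x)) * sU x a b
        + Real.cos (ψ x) * DsU x e a b
        - (dφ x e * Real.sin (ψ x) + dψ x e * Real.cos (ψ x)) * U x a b
        - Real.sin (ψ x) * DU x e a b))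
    -- divergences δ = −Tr∇
    (hδU : ∀ x b, δU x b = -∑ e, ∑ e', ginv x e e' * DU x e e' b)
    (hδsU : ∀ x b, δsU x b = -∑ e, ∑ e', ginv x e e' * DsU x e e' b)
    (hδF : ∀ x b, δF x b = -∑ e, ∑ e', ginv x e e' * DF x e e' b)
    (hδsF : ∀ x b, δsF x b = -∑ e, ∑ e', ginv x e e' * DsF x e e' b) :
    ((∀ x b, δF x b = 0) ∧ (∀ x b, δsF x b = 0)) ↔
      ((∀ x b, dφ x b =
          (∑ a, ∑ a', ginv x a a' * δU x a * U x a' b)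
            - (∑ a, ∑ a', ginv x a a' * δsU x a * sU x a' b)) ∧
       (∀ x b, dψ x b =
          -(∑ a, ∑ a', ginv x a a' * δU x a * sU x a' b)
            - (∑ a, ∑ a', ginv x a a' * δsU x a * U x a' b))) :=
  stmt_8_general M g ginv U sU φ ψ dφ dψ DU DsU DF DsF δU δsU δF δsF hginv hU2 hUsU hDF hDsF hδU
    hδsU hδF hδsF
end

section
/- Let g̃ = σ⁻ + σ⁺ be a 2+2 product spacetime metric with Gaussian curvatures X₋, X₊ of the factors. Then the Weyl tensor of g̃ vanishes at a point if and only if X₋ + X₊ = 0 there; moreover, if X₋ + X₊ = 0 holds identically on a connected product of surfaces, then X₋ and X₊ are both constant. -/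
def liftL (A : Fin 2 → Fin 2 → ℝ) : (Fin 2 ⊕ Fin 2) → (Fin 2 ⊕ Fin 2) → ℝ
  | .inl i, .inl j => A i j
  | _, _ => 0

def liftR (A : Fin 2 → Fin 2 → ℝ) : (Fin 2 ⊕ Fin 2) → (Fin 2 ⊕ Fin 2) → ℝ
  | .inr i, .inr j => A i j
  | _, _ => 0

/-- Double-forms exterior product. -/
def dwedge {I : Type*} (A B : I → I → ℝ) : I → I → I → I → ℝ :=
  fun a b m n => A a m * B b n + A b n * B a m - A a n * B b m - A b m * B a n

/-!
The metric is block diagonal and `Ric = diag(X₋ I, X₊ I) · g`, so the scalar curvature is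
`R = tr (g⁻¹ Ric) = tr diag(X₋ I, X₊ I) = 2 (X₋ + X₊)`. Substituting this, the Weyl tensor
collapses to `W = ((X₋ + X₊) / 6) (σ⁻ ∧̇ σ⁻ + σ⁺ ∧̇ σ⁺ − σ⁻ ∧̇ σ⁺)`, whose mixed component
`W(∂ᵢ⁻, ∂ⱼ⁺, ∂ₖ⁻, ∂ₗ⁺) = −((X₋ + X₊) / 6) σ⁻ᵢₖ σ⁺ⱼₗ` vanishes only if `X₋ + X₊ = 0`, because
invertibility of `g` forces both blocks to be nonzero. Finally `X₋(x) = −X₊(y)` for all `x`, `y`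
separates the variables.
-/

open Matrix

theorem smul_liftL_add_smul_liftR (x y : ℝ) (A B : Fin 2 → Fin 2 → ℝ) (a b : Fin 2 ⊕ Fin 2) :
    x * liftL A a b + y * liftR B a b = fromBlocks (x • of A) 0 0 (y • of B) a b := by
  cases a <;> cases b <;> simp [liftL, liftR]

theorem liftL_add_liftR (A B : Fin 2 → Fin 2 → ℝ) (a b : Fin 2 ⊕ Fin 2) :
    liftL A a b + liftR B a b = fromBlocks (of A) 0 0 (of B) a b := by
  simpa using smul_liftL_add_smul_liftR 1 1 A B a b

theorem sum_inv_mul_mul_eq_trace {n R : Type*} [Fintype n] [DecidableEq n] [CommRing R]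
    {g ginv D : Matrix n n R} (hinv : g * ginv = 1) (hsym : (D * g).IsSymm) :
    ∑ a, ∑ b, ginv a b * (D * g) a b = D.trace := by
  calc ∑ a, ∑ b, ginv a b * (D * g) a b = (ginv * (D * g)ᵀ).trace := by
        simp only [trace, diag, mul_apply, transpose_apply]
    _ = (D * (g * ginv)).trace := by
        rw [hsym.eq, trace_mul_comm, Matrix.mul_assoc]
    _ = D.trace := by rw [hinv, Matrix.mul_one]

theorem sum_inv_mul_smul_liftL_add_smul_liftR {A B : Fin 2 → Fin 2 → ℝ}
    (hA : (of A).IsSymm) (hB : (of B).IsSymm) {ginv : Matrix (Fin 2 ⊕ Fin 2) (Fin 2 ⊕ Fin 2) ℝ}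
    (hinv : fromBlocks (of A) 0 0 (of B) * ginv = 1)
    (x y : ℝ) : ∑ a, ∑ b, ginv a b * (x * liftL A a b + y * liftR B a b) = 2 * (x + y) := by
  have hRic : fromBlocks (x • of A) 0 0 (y • of B) =
      fromBlocks (x • 1) 0 0 (y • 1) * fromBlocks (of A) 0 0 (of B) := by
    simp [fromBlocks_multiply]
  simp_rw [smul_liftL_add_smul_liftR]
  rw [hRic, sum_inv_mul_mul_eq_trace hinv]
  · simp [trace, Fintype.sum_sum_type, ← add_mul, mul_comm]
  · rw [← hRic]; exact (hA.smul x).fromBlocks (by simp) (hB.smul y)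

theorem ne_zero_of_fromBlocks_mul_eq_one {m n R : Type*} [Fintype m] [Fintype n] [DecidableEq m]
    [DecidableEq n] [Nonempty m] [Nonempty n] [Semiring R] [Nontrivial R]
    {A : Matrix m m R} {B : Matrix n n R} {ginv : Matrix (m ⊕ n) (m ⊕ n) R}
    (hinv : fromBlocks A 0 0 B * ginv = 1) : A ≠ 0 ∧ B ≠ 0 := by
  rw [← fromBlocks_toBlocks ginv, fromBlocks_multiply, ← fromBlocks_one] at hinv
  obtain ⟨hA, -, -, hB⟩ := fromBlocks_inj.mp hinv
  constructor <;> rintro rfl <;> simp_all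

def productWeyl {I : Type*} (A B : I → I → ℝ) : I → I → I → I → ℝ :=
  fun a b m n => dwedge A A a b m n + dwedge B B a b m n - dwedge A B a b m n

theorem weyl_eq_productWeyl {I : Type*} (A B : I → I → ℝ) (x y : ℝ) (a b m n : I) :
    (1/2) * x * dwedge A A a b m n + (1/2) * y * dwedge B B a b m n
      - (1/2) * dwedge (fun a' b' => (x * A a' b' + y * B a' b')
          - (2 * (x + y) / 6) * (A a' b' + B a' b')) (fun a' b' => A a' b' + B a' b') a b m n
      = (x + y) / 6 * productWeyl A B a b m n := by
  simp only [productWeyl, dwedge]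
  ring

theorem mul_productWeyl_eq_zero_iff {A B : Fin 2 → Fin 2 → ℝ} (hA : A ≠ 0) (hB : B ≠ 0)
    (c : ℝ) : (∀ a b m n, c * productWeyl (liftL A) (liftR B) a b m n = 0) ↔ c = 0 := by
  refine ⟨fun h => ?_, fun hc _ _ _ _ => by rw [hc, zero_mul]⟩
  obtain ⟨i, k, hik⟩ : ∃ i k, A i k ≠ 0 := by
    by_contra! h0
    exact hA (funext₂ h0)
  obtain ⟨j, l, hjl⟩ : ∃ j l, B j l ≠ 0 := by
    by_contra! h0
    exact hB (funext₂ h0)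
  have hmixed := h (Sum.inl i) (Sum.inr j) (Sum.inl k) (Sum.inr l)
  simpa [productWeyl, dwedge, liftL, liftR, hik, hjl] using hmixed

theorem forall_eq_of_add_eq_const {α β M : Type*} [Nonempty α] [Nonempty β] [Add M] [IsCancelAdd M]
    {f : α → M} {h : β → M} {c : M} (hfh : ∀ x y, f x + h y = c) :
    (∀ x₁ x₂, f x₁ = f x₂) ∧ (∀ y₁ y₂, h y₁ = h y₂) := by
  obtain ⟨x⟩ := ‹Nonempty α›
  obtain ⟨y⟩ := ‹Nonempty β›
  exact ⟨fun x₁ x₂ => add_right_cancel ((hfh x₁ y).trans (hfh x₂ y).symm),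
    fun y₁ y₂ => add_left_cancel ((hfh x y₁).trans (hfh x y₂).symm)⟩

theorem stmt_11_general (Mm Mp : Type*) [Nonempty Mm] [Nonempty Mp]
    (σm : Mm → Fin 2 → Fin 2 → ℝ) (σp : Mp → Fin 2 → Fin 2 → ℝ)
    (Xm : Mm → ℝ) (Xp : Mp → ℝ)
    (hσmsym : ∀ x i j, σm x i j = σm x j i)
    (hσpsym : ∀ y i j, σp y i j = σp y j i)
    (g ginv : Mm × Mp → (Fin 2 ⊕ Fin 2) → (Fin 2 ⊕ Fin 2) → ℝ)
    (hg : ∀ z a b, g z a b = liftL (σm z.1) a b + liftR (σp z.2) a b)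
    (hginv : ∀ z a b, ∑ e, g z a e * ginv z e b = if a = b then (1 : ℝ) else 0)
    (Riem : Mm × Mp → (Fin 2 ⊕ Fin 2) → (Fin 2 ⊕ Fin 2) → (Fin 2 ⊕ Fin 2) →
      (Fin 2 ⊕ Fin 2) → ℝ)
    -- Riemann tensor of the product metric
    (hRiem : ∀ z a b m n, Riem z a b m n =
      (1/2) * Xm z.1 * dwedge (liftL (σm z.1)) (liftL (σm z.1)) a b m n
      + (1/2) * Xp z.2 * dwedge (liftR (σp z.2)) (liftR (σp z.2)) a b m n)
    (Ric : Mm × Mp → (Fin 2 ⊕ Fin 2) → (Fin 2 ⊕ Fin 2) → ℝ)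
    (hRic : ∀ z b n, Ric z b n =
      Xm z.1 * liftL (σm z.1) b n + Xp z.2 * liftR (σp z.2) b n)
    (scalR : Mm × Mp → ℝ)
    (hscalR : ∀ z, scalR z = ∑ a, ∑ b, ginv z a b * Ric z a b)
    (W : Mm × Mp → (Fin 2 ⊕ Fin 2) → (Fin 2 ⊕ Fin 2) → (Fin 2 ⊕ Fin 2) →
      (Fin 2 ⊕ Fin 2) → ℝ)
    -- Weyl tensor: W = Riem − (1/2)(Ric − (R/6) g) ∧̇ g
    (hW : ∀ z a b m n, W z a b m n = Riem z a b m n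
      - (1/2) * dwedge (fun a' b' => Ric z a' b' - (scalR z / 6) * g z a' b')
          (g z) a b m n) :
    (∀ z, ((∀ a b m n, W z a b m n = 0) ↔ Xm z.1 + Xp z.2 = 0))
    ∧ ((∀ z : Mm × Mp, Xm z.1 + Xp z.2 = 0) →
        ((∀ x₁ x₂ : Mm, Xm x₁ = Xm x₂) ∧ (∀ y₁ y₂ : Mp, Xp y₁ = Xp y₂))) := by
  have hinv : ∀ z, fromBlocks (of (σm z.1)) 0 0 (of (σp z.2)) * of (ginv z) = 1 := fun z => by
    ext a b
    rw [mul_apply, one_apply, ← hginv z a b]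
    exact Finset.sum_congr rfl fun e _ => by rw [hg, liftL_add_liftR, of_apply]
  have hscal : ∀ z, scalR z = 2 * (Xm z.1 + Xp z.2) := fun z => by
    simp only [hscalR, hRic]
    exact sum_inv_mul_smul_liftL_add_smul_liftR (IsSymm.ext fun i j => hσmsym z.1 j i)
      (IsSymm.ext fun i j => hσpsym z.2 j i) (hinv z) _ _
  have hWeyl : ∀ z a b m n, W z a b m n =
      (Xm z.1 + Xp z.2) / 6 * productWeyl (liftL (σm z.1)) (liftR (σp z.2)) a b m n := by
    intro z a b m n
    rw [hW, hRiem, hscal, ← weyl_eq_productWeyl, funext₂ (hg z)]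
    simp only [hRic]
  refine ⟨fun z => ?_, fun hK => forall_eq_of_add_eq_const fun x y => hK (x, y)⟩
  obtain ⟨hσm, hσp⟩ := ne_zero_of_fromBlocks_mul_eq_one (hinv z)
  simp only [hWeyl, mul_productWeyl_eq_zero_iff (A := σm z.1) (B := σp z.2) hσm hσp]
  exact div_eq_zero_iff.trans (or_iff_left (by norm_num))

/-- for a 2+2 product spacetime metric `g̃ = σ⁻ + σ⁺` with
Gaussian curvatures `X₋`, `X₊` of the factors, the Weyl tensor
`W = Riem − (1/2)(Ric − (R/6)g)∧̇g` vanishes at a point iff `X₋ + X₊ = 0`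
there; moreover if `X₋ + X₊ = 0` holds identically on the (connected, here
arbitrary nonempty) product, then `X₋` and `X₊` are both constant. -/
theorem stmt_11 (Mm Mp : Type*) [Nonempty Mm] [Nonempty Mp]
    (σm : Mm → Fin 2 → Fin 2 → ℝ) (σp : Mp → Fin 2 → Fin 2 → ℝ)
    (Xm : Mm → ℝ) (Xp : Mp → ℝ)
    (hσmsym : ∀ x i j, σm x i j = σm x j i)
    (hσpsym : ∀ y i j, σp y i j = σp y j i)
    (g ginv : Mm × Mp → (Fin 2 ⊕ Fin 2) → (Fin 2 ⊕ Fin 2) → ℝ)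
    (hg : ∀ z a b, g z a b = liftL (σm z.1) a b + liftR (σp z.2) a b)
    (hginv : ∀ z a b, ∑ e, g z a e * ginv z e b = if a = b then (1 : ℝ) else 0)
    (hginvblock : ∀ z a b, ginv z a b =
      liftL (fun i j => ginv z (.inl i) (.inl j)) a b
      + liftR (fun i j => ginv z (.inr i) (.inr j)) a b)
    (Riem : Mm × Mp → (Fin 2 ⊕ Fin 2) → (Fin 2 ⊕ Fin 2) → (Fin 2 ⊕ Fin 2) →
      (Fin 2 ⊕ Fin 2) → ℝ)
    -- Riemann tensor of the product metric
    (hRiem : ∀ z a b m n, Riem z a b m n =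
      (1/2) * Xm z.1 * dwedge (liftL (σm z.1)) (liftL (σm z.1)) a b m n
      + (1/2) * Xp z.2 * dwedge (liftR (σp z.2)) (liftR (σp z.2)) a b m n)
    (Ric : Mm × Mp → (Fin 2 ⊕ Fin 2) → (Fin 2 ⊕ Fin 2) → ℝ)
    (hRic : ∀ z b n, Ric z b n =
      Xm z.1 * liftL (σm z.1) b n + Xp z.2 * liftR (σp z.2) b n)
    (scalR : Mm × Mp → ℝ)
    (hscalR : ∀ z, scalR z = ∑ a, ∑ b, ginv z a b * Ric z a b)
    (W : Mm × Mp → (Fin 2 ⊕ Fin 2) → (Fin 2 ⊕ Fin 2) → (Fin 2 ⊕ Fin 2) →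
      (Fin 2 ⊕ Fin 2) → ℝ)
    -- Weyl tensor: W = Riem − (1/2)(Ric − (R/6) g) ∧̇ g
    (hW : ∀ z a b m n, W z a b m n = Riem z a b m n
      - (1/2) * dwedge (fun a' b' => Ric z a' b' - (scalR z / 6) * g z a' b')
          (g z) a b m n) :
    (∀ z, ((∀ a b m n, W z a b m n = 0) ↔ Xm z.1 + Xp z.2 = 0))
    ∧ ((∀ z : Mm × Mp, Xm z.1 + Xp z.2 = 0) →
        ((∀ x₁ x₂ : Mm, Xm x₁ = Xm x₂) ∧ (∀ y₁ y₂ : Mp, Xp y₁ = Xp y₂))) :=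
  stmt_11_general Mm Mp σm σp Xm Xp hσmsym hσpsym g ginv hg hginv Riem hRiem Ric hRic scalR hscalR W
    hW
end

section
/- Suppose a type D spacetime satisfies the Bianchi-derived equations (3α + 2χ) Q_v = v ⊗ h(dα) and (3α − 2χ) Q_h = h ⊗ v(dα), where α is the (real) Weyl eigenvalue, χ the Ricci eigenvalue function, and Q_v, Q_h the generalized second fundamental forms of the principal planes. If (3α)² ≠ (2χ)² everywhere, then both principal planes are umbilical and both are foliations: the antisymmetric parts A_v, A_h and the traceless symmetric parts S_v^T, S_h^T of Q_v, Q_h all vanish. -/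
/-!
Since `3α ± 2χ ≠ 0`, the Bianchi-derived equations can be solved for `Q_v` and `Q_h`: each is a
pure tensor `w ⊗ θ` whose first factor `w` is the symmetric projector of its plane. Such a
tensor is symmetric in its first two slots, so its antisymmetric part vanishes, and its trace
over those slots is `(tr w) θ = p θ`, so subtracting `p⁻¹ w ⊗ Tr` removes all of it.
-/

open Finset

namespace PureTensor

variable {ι K : Type*} [Field K]
  {Q : ι → ι → ι → K} {w : ι → ι → K} {θ : ι → K}

lemma eq_mul_div_of_mul_eq {c : K} {ω : ι → K} (hc : c ≠ 0)
    (hQ : ∀ a b e, c * Q a b e = w a b * ω e) (a b e : ι) :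
    Q a b e = w a b * (ω e / c) := by
  rw [mul_div_assoc', eq_div_iff hc, mul_comm, hQ]

lemma swap_eq (hQ : ∀ a b e, Q a b e = w a b * θ e) (hw : ∀ a b, w a b = w b a) (a b e : ι) :
    Q b a e = Q a b e := by
  rw [hQ, hQ, hw]

lemma trace_eq [Fintype ι] (hQ : ∀ a b e, Q a b e = w a b * θ e) (ginv : ι → ι → K) (e : ι) :
    ∑ a, ∑ b, ginv a b * Q a b e = (∑ a, ∑ b, ginv a b * w a b) * θ e := by
  simp only [hQ, sum_mul, mul_assoc]

theorem antisymm_eq_zero_and_traceless_eq_zero [Fintype ι] [NeZero (2 : K)]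
    (hQ : ∀ a b e, Q a b e = w a b * θ e) (hw : ∀ a b, w a b = w b a)
    {ginv : ι → ι → K} {p : K} (hp : p ≠ 0) (htr : ∑ a, ∑ b, ginv a b * w a b = p)
    {A S ST : ι → ι → ι → K} {Tr : ι → K}
    (hA : ∀ a b e, A a b e = (Q a b e - Q b a e) / 2)
    (hS : ∀ a b e, S a b e = (Q a b e + Q b a e) / 2)
    (hTr : ∀ e, Tr e = ∑ a, ∑ b, ginv a b * S a b e)
    (hST : ∀ a b e, ST a b e = S a b e - p⁻¹ * w a b * Tr e) :
    (∀ a b e, A a b e = 0) ∧ (∀ a b e, ST a b e = 0) := by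
  have hSQ : ∀ a b e, S a b e = Q a b e := fun a b e => by
    rw [hS, swap_eq hQ hw, add_self_div_two]
  have hTrθ : ∀ e, Tr e = p * θ e := fun e => by
    simp only [hTr, hSQ, trace_eq hQ, htr]
  refine ⟨fun a b e => by rw [hA, swap_eq hQ hw, sub_self, zero_div], fun a b e => ?_⟩
  rw [hST, hSQ, hTrθ, hQ]
  field_simp
  ring

end PureTensor

theorem stmt_17_general
    (ginv vcov hcov : Fin 4 → Fin 4 → ℝ)
    (α χ : ℝ)
    (hvcovsym : ∀ a b, vcov a b = vcov b a)
    (hhcovsym : ∀ a b, hcov a b = hcov b a)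
    -- the principal planes are 2-dimensional: p = 2 for both
    (htrv : (∑ a, ∑ b, ginv a b * vcov a b) = 2)
    (htrh : (∑ a, ∑ b, ginv a b * hcov a b) = 2)
    (hdα vdα : Fin 4 → ℝ)
    (Qv Qh : Fin 4 → Fin 4 → Fin 4 → ℝ)
    -- Bianchi-derived equations
    (hBv : ∀ a b e, (3 * α + 2 * χ) * Qv a b e = vcov a b * hdα e)
    (hBh : ∀ a b e, (3 * α - 2 * χ) * Qh a b e = hcov a b * vdα e)
    (hne : (3 * α) ^ 2 ≠ (2 * χ) ^ 2)
    (Av Ah Sv Sh SvT ShT : Fin 4 → Fin 4 → Fin 4 → ℝ)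
    (TrSv TrSh : Fin 4 → ℝ)
    (hAv : ∀ a b e, Av a b e = (Qv a b e - Qv b a e) / 2)
    (hAh : ∀ a b e, Ah a b e = (Qh a b e - Qh b a e) / 2)
    (hSv : ∀ a b e, Sv a b e = (Qv a b e + Qv b a e) / 2)
    (hSh : ∀ a b e, Sh a b e = (Qh a b e + Qh b a e) / 2)
    (hTrSv : ∀ e, TrSv e = ∑ a, ∑ b, ginv a b * Sv a b e)
    (hTrSh : ∀ e, TrSh e = ∑ a, ∑ b, ginv a b * Sh a b e)
    (hSvT : ∀ a b e, SvT a b e = Sv a b e - (1/2) * vcov a b * TrSv e)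
    (hShT : ∀ a b e, ShT a b e = Sh a b e - (1/2) * hcov a b * TrSh e) :
    (∀ a b e, Av a b e = 0) ∧ (∀ a b e, Ah a b e = 0)
    ∧ (∀ a b e, SvT a b e = 0) ∧ (∀ a b e, ShT a b e = 0) := by
  have hplus : 3 * α + 2 * χ ≠ 0 := fun h0 => hne (by rw [eq_neg_of_add_eq_zero_left h0]; ring)
  have hminus : 3 * α - 2 * χ ≠ 0 := fun h0 => hne (by rw [sub_eq_zero.mp h0])
  obtain ⟨hAv0, hSvT0⟩ := PureTensor.antisymm_eq_zero_and_traceless_eq_zero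
    (PureTensor.eq_mul_div_of_mul_eq hplus hBv) hvcovsym two_ne_zero htrv hAv hSv hTrSv
    (by simpa only [one_div] using hSvT)
  obtain ⟨hAh0, hShT0⟩ := PureTensor.antisymm_eq_zero_and_traceless_eq_zero
    (PureTensor.eq_mul_div_of_mul_eq hminus hBh) hhcovsym two_ne_zero htrh hAh hSh hTrSh
    (by simpa only [one_div] using hShT)
  exact ⟨hAv0, hAh0, hSvT0, hShT0⟩

/-- pointwise index model: if a type D spacetime satisfies the
Bianchi-derived equations `(3α + 2χ) Q_v = v ⊗ h(dα)` and
`(3α − 2χ) Q_h = h ⊗ v(dα)`, and `(3α)² ≠ (2χ)²` everywhere, then both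
principal planes are umbilical and both are foliations: the antisymmetric
parts `A_v`, `A_h` and the traceless symmetric parts `S_v^T`, `S_h^T` of the
generalized second fundamental forms `Q_v`, `Q_h` all vanish. -/
theorem stmt_17
    (g ginv v h vcov hcov : Fin 4 → Fin 4 → ℝ)
    (α χ : ℝ)
    (hgsym : ∀ a b, g a b = g b a)
    (hginvsym : ∀ a b, ginv a b = ginv b a)
    (hginv : ∀ a b, ∑ e, g a e * ginv e b = if a = b then (1 : ℝ) else 0)
    (hvcov : ∀ a b, vcov a b = ∑ e, g a e * v e b)
    (hhcov : ∀ a b, hcov a b = ∑ e, g a e * h e b)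
    (hvcovsym : ∀ a b, vcov a b = vcov b a)
    (hhcovsym : ∀ a b, hcov a b = hcov b a)
    -- the principal planes are 2-dimensional: p = 2 for both
    (htrv : (∑ a, ∑ b, ginv a b * vcov a b) = 2)
    (htrh : (∑ a, ∑ b, ginv a b * hcov a b) = 2)
    (dα hdα vdα : Fin 4 → ℝ)
    (hhdα : ∀ b, hdα b = ∑ a, dα a * h a b)
    (hvdα : ∀ b, vdα b = ∑ a, dα a * v a b)
    (Qv Qh : Fin 4 → Fin 4 → Fin 4 → ℝ)
    -- Bianchi-derived equations
    (hBv : ∀ a b e, (3 * α + 2 * χ) * Qv a b e = vcov a b * hdα e)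
    (hBh : ∀ a b e, (3 * α - 2 * χ) * Qh a b e = hcov a b * vdα e)
    (hne : (3 * α) ^ 2 ≠ (2 * χ) ^ 2)
    (Av Ah Sv Sh SvT ShT : Fin 4 → Fin 4 → Fin 4 → ℝ)
    (TrSv TrSh : Fin 4 → ℝ)
    (hAv : ∀ a b e, Av a b e = (Qv a b e - Qv b a e) / 2)
    (hAh : ∀ a b e, Ah a b e = (Qh a b e - Qh b a e) / 2)
    (hSv : ∀ a b e, Sv a b e = (Qv a b e + Qv b a e) / 2)
    (hSh : ∀ a b e, Sh a b e = (Qh a b e + Qh b a e) / 2)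
    (hTrSv : ∀ e, TrSv e = ∑ a, ∑ b, ginv a b * Sv a b e)
    (hTrSh : ∀ e, TrSh e = ∑ a, ∑ b, ginv a b * Sh a b e)
    (hSvT : ∀ a b e, SvT a b e = Sv a b e - (1/2) * vcov a b * TrSv e)
    (hShT : ∀ a b e, ShT a b e = Sh a b e - (1/2) * hcov a b * TrSh e) :
    (∀ a b e, Av a b e = 0) ∧ (∀ a b e, Ah a b e = 0)
    ∧ (∀ a b e, SvT a b e = 0) ∧ (∀ a b e, ShT a b e = 0) :=
  stmt_17_general ginv vcov hcov α χ hvcovsym hhcovsym htrv htrh hdα vdα Qv Qh hBv hBh hne Av Ah Sv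
    Sh SvT ShT TrSv TrSh hAv hAh hSv hSh hTrSv hTrSh hSvT hShT
end
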